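/- arXiv:1904.00849 — 8 statements merged into one kernel-verified Lean document; each statement's English description precedes it below -/
import Mathlib

section
/- It is impossible to have a family of measurable functions φ_t : Ω → {0,1} indexed by t ∈ [0,1], each jointly forming a measurable function in t for each fixed ω, taking values only in {0,1}, such that for almost every ω and every θ ∈ (0,1], ∫₀^θ φ_t(ω) dt = θ/2. (Feldman–Gilles impossibility.) -/
/-!
Fix an `ω` for which the identity holds. Then `t ↦ φ t ω` has the same primitive on `(0, 1)` as
the constant `1/2`, so by the Lebesgue differentiation theorem `φ t ω = 1/2` for almost every
`t ∈ (0, 1)`, which is impossible for a `{0,1}`-valued function.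
-/

open MeasureTheory Set

theorem ae_eq_of_forall_intervalIntegral_eq {E : Type*} [NormedAddCommGroup E] [NormedSpace ℝ E]
    [CompleteSpace E] {f g : ℝ → E} {a b : ℝ} (hf : IntervalIntegrable f volume a b)
    (hg : IntervalIntegrable g volume a b)
    (h : ∀ θ ∈ Ioo a b, ∫ t in a..θ, f t = ∫ t in a..θ, g t) :
    ∀ᵐ x, x ∈ Ioo a b → f x = g x := by
  filter_upwards [hf.ae_hasDerivAt_integral, hg.ae_hasDerivAt_integral] with x hfx hgx hx
  have hx' : x ∈ uIcc a b := by
    rw [uIcc_of_le (hx.1.trans hx.2).le]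
    exact Ioo_subset_Icc_self hx
  have hprim : (fun y => ∫ t in a..y, f t) =ᶠ[nhds x] fun y => ∫ t in a..y, g t :=
    Filter.eventually_of_mem (Ioo_mem_nhds hx.1 hx.2) h
  exact (hfx hx' a left_mem_uIcc).unique
    ((hgx hx' a left_mem_uIcc).congr_of_eventuallyEq hprim)

theorem stmt_2_general {Ω : Type*} [MeasurableSpace Ω] (P : Measure Ω) [IsProbabilityMeasure P]
    (φ : ℝ → Ω → ℝ)
    (hval : ∀ t ω, φ t ω = 0 ∨ φ t ω = 1) :
    ¬ (∀ᵐ ω ∂P, ∀ θ ∈ Set.Ioc (0:ℝ) 1, ∫ t in (0:ℝ)..θ, φ t ω = θ / 2) := by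
  intro hA
  obtain ⟨ω, hω⟩ := hA.exists
  have hint : IntervalIntegrable (φ · ω) volume 0 1 :=
    intervalIntegral.intervalIntegrable_of_integral_ne_zero <| by
      rw [hω 1 ⟨one_pos, le_rfl⟩]; norm_num
  have hhalf : ∀ᵐ t, t ∈ Ioo (0:ℝ) 1 → φ t ω = 1 / 2 :=
    ae_eq_of_forall_intervalIntegral_eq hint intervalIntegrable_const fun θ hθ => by
      rw [hω θ (Ioo_subset_Ioc_self hθ), intervalIntegral.integral_const, smul_eq_mul]
      ring
  have hne : (ae (volume.restrict (Ioo (0:ℝ) 1))).NeBot := by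
    rw [ae_restrict_neBot]; simp
  obtain ⟨t, ht⟩ := ((ae_restrict_iff' measurableSet_Ioo).mpr hhalf).exists
  rcases hval t ω with h | h <;> linarith

/-- Feldman–Gilles impossibility: there is no family of `{0,1}`-valued random variables
`φ_t`, `t ∈ [0,1]`, measurable in `t` for each fixed `ω`, such that almost surely
`∫₀^θ φ_t(ω) dt = θ/2` for every `θ ∈ (0,1]`. -/
theorem stmt_2 {Ω : Type*} [MeasurableSpace Ω] (P : Measure Ω) [IsProbabilityMeasure P]
    (φ : ℝ → Ω → ℝ)
    (hmeas : ∀ t, Measurable (φ t))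
    (hsec : ∀ ω, Measurable fun t => φ t ω)
    (hval : ∀ t ω, φ t ω = 0 ∨ φ t ω = 1) :
    ¬ (∀ᵐ ω ∂P, ∀ θ ∈ Set.Ioc (0:ℝ) 1, ∫ t in (0:ℝ)..θ, φ t ω = θ / 2) :=
  stmt_2_general P φ hval
end

section
/- If φ : Ω × Θ → R is a rich function, then the map Ψ : E_B → 𝒫(Ω) defined by Ψ(X) = {ω : φ_ω ∈ X} (where φ_ω(θ) = φ(ω,θ)) is an injective σ-algebra homomorphism; in particular its image 𝓑 = Ψ(E_B) is a σ-algebra of subsets of Ω and Ψ : E_B → 𝓑 is a σ-algebra isomorphism. -/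
open MeasureTheory Set

/-- A function `φ : Ω × Θ → R` (curried) is rich. -/
def Rich {Ω Θ R : Type*} (φ : Ω → Θ → R) : Prop :=
  ∀ h : ℕ → R,
    (∀ f : ℕ → Θ, Function.Injective f → ∃ ω, ∀ n, φ ω (f n) = h n) ∧
    (∀ g : ℕ → Ω, Function.Injective g → ∃ θ, ∀ n, φ (g n) θ = h n)

/-- The cylinder sets in `Θ → R`. -/
def cylinderSets (Θ R : Type*) [MeasurableSpace R] : Set (Set (Θ → R)) :=
  {C | ∃ α : Θ → Set R, (∀ θ, MeasurableSet (α θ)) ∧ (∀ θ, (α θ).Nonempty) ∧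
    {θ | α θ ≠ Set.univ}.Finite ∧ C = {x | ∀ θ, x θ ∈ α θ}}

/-! A rich `φ` realises every countable family of coordinates `x|_S` as some section `φ ω`,
while every set of the product σ-algebra is determined by countably many coordinates. Hence
`φ ⁻¹' X ⊆ φ ⁻¹' Y` forces `X ⊆ Y`; the homomorphism properties hold for any preimage map,
and the image of a σ-algebra under `X ↦ φ ⁻¹' X` is the σ-algebra `comap φ`. -/

lemma exists_countable_dependsOn_mem_of_measurableSet {Θ R : Type*} [MeasurableSpace R]
    {X : Set (Θ → R)}
    (hX : MeasurableSet[MeasurableSpace.generateFrom (cylinderSets Θ R)] X) :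
    ∃ S : Set Θ, S.Countable ∧ DependsOn (· ∈ X) S := by
  induction hX with
  | basic C hC =>
    obtain ⟨α, -, -, hfin, rfl⟩ := hC
    refine ⟨{θ | α θ ≠ univ}, hfin.countable, fun x y hxy => ?_⟩
    refine propext (forall_congr' fun θ => ?_)
    by_cases hθ : α θ = univ
    · simp [hθ]
    · rw [hxy θ hθ]
  | empty => exact ⟨∅, countable_empty, fun _ _ _ => rfl⟩
  | compl X _ ih =>
    obtain ⟨S, hS, hdep⟩ := ih
    exact ⟨S, hS, fun x y hxy => congrArg Not (hdep hxy)⟩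
  | iUnion X _ ih =>
    choose S hS hdep using ih
    refine ⟨⋃ n, S n, countable_iUnion hS, fun x y hxy => ?_⟩
    simp only [mem_iUnion]
    exact propext (exists_congr fun n =>
      (hdep n fun θ hθ => hxy θ (mem_iUnion_of_mem n hθ)).to_iff)

lemma Set.Countable.exists_injective_nat_subset_range {Θ : Type*} [Infinite Θ] {S : Set Θ}
    (hS : S.Countable) : ∃ f : ℕ → Θ, Function.Injective f ∧ S ⊆ range f := by
  set T := S ∪ range (_root_.Infinite.natEmbedding Θ)
  have : Countable T := (hS.union (countable_range _)).to_subtype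
  have : Infinite T :=
    ((infinite_range_of_injective (_root_.Infinite.natEmbedding Θ).injective).mono
      subset_union_right).to_subtype
  obtain ⟨_⟩ := nonempty_denumerable T
  let e := Denumerable.eqv T
  exact ⟨fun n => e.symm n, Subtype.val_injective.comp e.symm.injective,
    fun θ hθ => ⟨e ⟨θ, Or.inl hθ⟩, by simp⟩⟩

section Rich

variable {Ω Θ R : Type*} {φ : Ω → Θ → R}

lemma Rich.exists_eqOn [Infinite Θ] (hφ : Rich φ) {S : Set Θ} (hS : S.Countable)
    (x : Θ → R) : ∃ ω, EqOn (φ ω) x S := by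
  obtain ⟨f, hf, hSf⟩ := hS.exists_injective_nat_subset_range
  obtain ⟨ω, hω⟩ := (hφ (x ∘ f)).1 f hf
  refine ⟨ω, fun θ hθ => ?_⟩
  obtain ⟨n, rfl⟩ := hSf hθ
  exact hω n

variable [MeasurableSpace R] [Infinite Θ]

lemma Rich.preimage_subset_preimage_iff (hφ : Rich φ) {X Y : Set (Θ → R)}
    (hX : MeasurableSet[MeasurableSpace.generateFrom (cylinderSets Θ R)] X)
    (hY : MeasurableSet[MeasurableSpace.generateFrom (cylinderSets Θ R)] Y) :
    φ ⁻¹' X ⊆ φ ⁻¹' Y ↔ X ⊆ Y := by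
  refine ⟨fun hXY x hx => ?_, fun hXY => preimage_mono hXY⟩
  obtain ⟨S, hS, hdepX⟩ := exists_countable_dependsOn_mem_of_measurableSet hX
  obtain ⟨T, hT, hdepY⟩ := exists_countable_dependsOn_mem_of_measurableSet hY
  obtain ⟨ω, hω⟩ := hφ.exists_eqOn (hS.union hT) x
  have hωX : φ ω ∈ X := (hdepX.mono subset_union_left fun θ hθ => hω hθ).mpr hx
  exact (hdepY.mono subset_union_right fun θ hθ => hω hθ).mp (hXY hωX)

lemma Rich.injOn_preimage (hφ : Rich φ) :
    InjOn (preimage φ) {X | MeasurableSet[MeasurableSpace.generateFrom (cylinderSets Θ R)] X} :=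
  fun _ hX _ hY hXY => (hφ.preimage_subset_preimage_iff hX hY).mp hXY.le |>.antisymm
    ((hφ.preimage_subset_preimage_iff hY hX).mp hXY.ge)

end Rich

theorem stmt_3_general {Ω Θ R : Type*} [MeasurableSpace R] [Infinite Θ]
    (φ : Ω → Θ → R) (hφ : Rich φ)
    (EB : MeasurableSpace (Θ → R))
    (hEB : EB = MeasurableSpace.generateFrom (cylinderSets Θ R))
    (Ψ : Set (Θ → R) → Set Ω) (hΨ : ∀ X, Ψ X = {ω | φ ω ∈ X}) :
    (Ψ Set.univ = Set.univ) ∧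
    (∀ X, Ψ Xᶜ = (Ψ X)ᶜ) ∧
    (∀ X : ℕ → Set (Θ → R), Ψ (⋃ n, X n) = ⋃ n, Ψ (X n)) ∧
    (∀ X Y : Set (Θ → R), MeasurableSet[EB] X → MeasurableSet[EB] Y →
      Ψ X = Ψ Y → X = Y) ∧
    (∃ m : MeasurableSpace Ω,
      ∀ s : Set Ω, MeasurableSet[m] s ↔ ∃ X, MeasurableSet[EB] X ∧ s = Ψ X) := by
  obtain rfl : Ψ = preimage φ := funext hΨ
  subst hEB
  refine ⟨preimage_univ, fun _ => preimage_compl, fun _ => preimage_iUnion,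
    fun X Y hX hY => hφ.injOn_preimage hX hY,
    MeasurableSpace.comap φ (MeasurableSpace.generateFrom (cylinderSets Θ R)), fun s => ?_⟩
  exact exists_congr fun X => and_congr_right fun _ => eq_comm

/-- If `φ` is rich, then `Ψ(X) = {ω | φ_ω ∈ X}` is an injective σ-algebra
homomorphism from the product σ-algebra `E_B` on `R^Θ` into `𝒫(Ω)`: it maps `univ` to
`univ`, commutes with complements and countable unions, is injective on measurable sets,
and its image `𝓑` is a σ-algebra of subsets of `Ω` (so `Ψ : E_B → 𝓑` is an
isomorphism of σ-algebras). -/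
theorem stmt_3 {Ω Θ R : Type*} [MeasurableSpace R] [Infinite Θ] [Infinite Ω]
    (hR : ∃ A : Set R, MeasurableSet A ∧ A ≠ ∅ ∧ A ≠ Set.univ)
    (φ : Ω → Θ → R) (hφ : Rich φ)
    (EB : MeasurableSpace (Θ → R))
    (hEB : EB = MeasurableSpace.generateFrom (cylinderSets Θ R))
    (Ψ : Set (Θ → R) → Set Ω) (hΨ : ∀ X, Ψ X = {ω | φ ω ∈ X}) :
    (Ψ Set.univ = Set.univ) ∧
    (∀ X, Ψ Xᶜ = (Ψ X)ᶜ) ∧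
    (∀ X : ℕ → Set (Θ → R), Ψ (⋃ n, X n) = ⋃ n, Ψ (X n)) ∧
    (∀ X Y : Set (Θ → R), MeasurableSet[EB] X → MeasurableSet[EB] Y →
      Ψ X = Ψ Y → X = Y) ∧
    (∃ m : MeasurableSpace Ω,
      ∀ s : Set Ω, MeasurableSet[m] s ↔ ∃ X, MeasurableSet[EB] X ∧ s = Ψ X) :=
  stmt_3_general φ hφ EB hEB Ψ hΨ
end

section
/- If φ : Ω × Θ → R is a rich function, then for every r ∈ R and every ω ∈ Ω, the set {θ ∈ Θ : φ(ω, θ) = r} has cardinality at least 2^ℵ₀. -/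
open Cardinal

/-!
Extend `ω` to an injective sequence `ω = ω₀, ω₁, ω₂, …`. By richness, every sequence
`h : ℕ → R` is realised as `n ↦ φ ωₙ₊₁ θ` by some `θ` with `φ ω₀ θ = r`, so the fiber over
`(ω, r)` surjects onto `ℕ → R`, which has cardinality `#R ^ ℵ₀ ≥ 2 ^ ℵ₀`.
-/

theorem Infinite.exists_injective_nat_apply_zero {α : Type*} [Infinite α] (a : α) :
    ∃ g : ℕ → α, Function.Injective g ∧ g 0 = a := by
  classical
  let e := Infinite.natEmbedding α
  exact ⟨Equiv.swap (e 0) a ∘ e, (Equiv.injective _).comp e.injective,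
    Equiv.swap_apply_left _ _⟩

theorem Rich.surjective_fiber_restrict {Ω Θ R : Type*} {φ : Ω → Θ → R} (hφ : Rich φ)
    {g : ℕ → Ω} (hg : Function.Injective g) (r : R) :
    Function.Surjective fun θ : {θ : Θ // φ (g 0) θ = r} ↦ fun n ↦ φ (g (n + 1)) θ.1 := by
  intro h
  obtain ⟨θ, hθ⟩ := (hφ fun n ↦ Nat.casesOn n r h).2 g hg
  exact ⟨⟨θ, hθ 0⟩, funext fun n ↦ hθ (n + 1)⟩

theorem Cardinal.two_power_aleph0_le_mk_nat_arrow (R : Type*) [Nontrivial R] :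
    (2 : Cardinal) ^ ℵ₀ ≤ #(ℕ → R) := by
  rw [mk_arrow, mk_nat, lift_aleph0]
  exact power_le_power_right (by simpa using two_le_iff.2 (exists_pair_ne R))

theorem stmt_4_general {Ω Θ R : Type*} [Nontrivial R] [Infinite Ω]
    (φ : Ω → Θ → R) (hφ : Rich φ) (r : R) (ω : Ω) :
    (2 : Cardinal) ^ Cardinal.aleph0 ≤ Cardinal.mk {θ : Θ // φ ω θ = r} := by
  obtain ⟨g, hg, rfl⟩ := Infinite.exists_injective_nat_apply_zero ω
  have hfiber := lift_mk_le_lift_mk_of_surjective (hφ.surjective_fiber_restrict hg r)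
  have hcont := lift_le.2 (two_power_aleph0_le_mk_nat_arrow R)
  simpa using hcont.trans hfiber

/-- If `φ` is rich, then for every `r ∈ R` and `ω ∈ Ω` the fiber
`{θ | φ(ω,θ) = r}` has cardinality at least `2^ℵ₀`. -/
theorem stmt_4 {Ω Θ R : Type*} [Nontrivial R] [Infinite Θ] [Infinite Ω]
    (φ : Ω → Θ → R) (hφ : Rich φ) (r : R) (ω : Ω) :
    (2 : Cardinal) ^ Cardinal.aleph0 ≤ Cardinal.mk {θ : Θ // φ ω θ = r} :=
  stmt_4_general φ hφ r ω
end

section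
/- Suppose S : τ → P is a fully specified sequence of partial functions from Ω × Θ to R: S is nested (ρ < σ < τ implies S(ρ) ⊆ S(σ)) and for every σ < τ, S(σ+1) forces the feature N(σ), where N : τ → T is a surjective enumeration of all features. Then φ = ⋃_{σ<τ} S(σ) is a well-defined total function Ω × Θ → R and is rich. -/
/-!
Any two stages below `τ` agree wherever both are defined, since the later one extends the
earlier. Every feature, in particular every point `(ω, θ)`, is forced at some stage below `τ`,
so the union is a total function `φ` extending every stage; forcing passes up to extensions,
so `φ` forces every feature, which is exactly richness.
-/

universe u

/-- The set of features
`T = {(h,f) ∈ R^ℕ × Θ^ℕ : f injective} ∪ {(h,g) ∈ R^ℕ × Ω^ℕ : g injective} ∪ (Ω × Θ)`. -/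
def Feature (Ω Θ R : Type u) : Type u :=
  {p : (ℕ → R) × (ℕ → Θ) // Function.Injective p.2} ⊕
  {p : (ℕ → R) × (ℕ → Ω) // Function.Injective p.2} ⊕ (Ω × Θ)

/-- A partial function `p : Ω × Θ ⇀ R`, encoded via `Option`, forces a feature. -/
def Forces {Ω Θ R : Type u} (p : Ω → Θ → Option R) : Feature Ω Θ R → Prop
  | Sum.inl ⟨(h, f), _⟩ => ∃ ω, ∀ n, p ω (f n) = some (h n)
  | Sum.inr (Sum.inl ⟨(h, g), _⟩) => ∃ θ, ∀ n, p (g n) θ = some (h n)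
  | Sum.inr (Sum.inr (ω, θ)) => ∃ r, p ω θ = some r

/-- One partial function extends another. -/
def Extends {Ω Θ R : Type u} (p q : Ω → Θ → Option R) : Prop :=
  ∀ ω θ r, p ω θ = some r → q ω θ = some r

namespace Forces

variable {Ω Θ R : Type u}

theorem mono {p q : Ω → Θ → Option R} (hpq : Extends p q) :
    ∀ {x : Feature Ω Θ R}, Forces p x → Forces q x
  | Sum.inl ⟨(_, _), _⟩, ⟨ω, hω⟩ => ⟨ω, fun n => hpq _ _ _ (hω n)⟩
  | Sum.inr (Sum.inl ⟨(_, _), _⟩), ⟨θ, hθ⟩ => ⟨θ, fun n => hpq _ _ _ (hθ n)⟩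
  | Sum.inr (Sum.inr (_, _)), ⟨r, hr⟩ => ⟨r, hpq _ _ _ hr⟩

end Forces

theorem rich_of_forall_forces {Ω Θ R : Type u} {φ : Ω → Θ → R}
    (hφ : ∀ x : Feature Ω Θ R, Forces (fun ω θ => some (φ ω θ)) x) : Rich φ := by
  intro h
  constructor
  · intro f hf
    obtain ⟨ω, hω⟩ := hφ (Sum.inl ⟨(h, f), hf⟩)
    exact ⟨ω, fun n => Option.some_injective _ (hω n)⟩
  · intro g hg
    obtain ⟨θ, hθ⟩ := hφ (Sum.inr (Sum.inl ⟨(h, g), hg⟩))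
    exact ⟨θ, fun n => Option.some_injective _ (hθ n)⟩

section Stages

variable {Ω Θ R : Type u} {τ : Ordinal.{u}} {S : Ordinal.{u} → Ω → Θ → Option R}

theorem exists_lt_forces (hτlim : ∀ σ, σ < τ → σ + 1 < τ) {N : Ordinal.{u} → Feature Ω Θ R}
    (hN : ∀ x : Feature Ω Θ R, ∃ σ, σ < τ ∧ N σ = x)
    (hforce : ∀ σ, σ < τ → Forces (S (σ + 1)) (N σ)) (x : Feature Ω Θ R) :
    ∃ σ, σ < τ ∧ Forces (S σ) x := by
  obtain ⟨σ, hσ, rfl⟩ := hN x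
  exact ⟨σ + 1, hτlim σ hσ, hforce σ hσ⟩

theorem eq_of_nested (hnested : ∀ ρ σ, ρ < σ → σ < τ → Extends (S ρ) (S σ))
    {σ₁ σ₂ : Ordinal.{u}} (h₁ : σ₁ < τ) (h₂ : σ₂ < τ) {ω : Ω} {θ : Θ} {r₁ r₂ : R}
    (e₁ : S σ₁ ω θ = some r₁) (e₂ : S σ₂ ω θ = some r₂) : r₁ = r₂ := by
  rcases lt_trichotomy σ₁ σ₂ with h | rfl | h
  · exact Option.some_injective _ ((hnested σ₁ σ₂ h h₂ ω θ r₁ e₁).symm.trans e₂)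
  · exact Option.some_injective _ (e₁.symm.trans e₂)
  · exact Option.some_injective _ (e₁.symm.trans (hnested σ₂ σ₁ h h₁ ω θ r₂ e₂))

end Stages

/-- If `S : τ → P` is a fully specified nested sequence of partial functions forcing,
at each successor stage, the corresponding feature of a surjective enumeration `N` of
all features, then `φ = ⋃_{σ<τ} S(σ)` is a well-defined total function `Ω × Θ → R`
and is rich. -/
theorem stmt_8 {Ω Θ R : Type u} (τ : Ordinal.{u})
    (hτlim : ∀ σ, σ < τ → σ + 1 < τ)
    (S : Ordinal.{u} → (Ω → Θ → Option R))
    (N : Ordinal.{u} → Feature Ω Θ R)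
    (hN : ∀ x : Feature Ω Θ R, ∃ σ, σ < τ ∧ N σ = x)
    (hnested : ∀ ρ σ, ρ < σ → σ < τ → Extends (S ρ) (S σ))
    (hforce : ∀ σ, σ < τ → Forces (S (σ + 1)) (N σ)) :
    ∃ φ : Ω → Θ → R,
      (∀ ω θ, ∃ σ, σ < τ ∧ S σ ω θ = some (φ ω θ)) ∧
      (∀ σ, σ < τ → Extends (S σ) (fun ω θ => some (φ ω θ))) ∧
      Rich φ := by
  have forced := exists_lt_forces hτlim hN hforce
  have total : ∀ ω θ, ∃ r, ∃ σ, σ < τ ∧ S σ ω θ = some r := fun ω θ => by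
    obtain ⟨σ, hσ, r, hr⟩ := forced (Sum.inr (Sum.inr (ω, θ)))
    exact ⟨r, σ, hσ, hr⟩
  choose φ σ₀ hσ₀ hφ using total
  have hext : ∀ σ, σ < τ → Extends (S σ) (fun ω θ => some (φ ω θ)) :=
    fun σ hσ ω θ r hr => congrArg some (eq_of_nested hnested hσ (hσ₀ ω θ) hr (hφ ω θ)).symm
  refine ⟨φ, fun ω θ => ⟨σ₀ ω θ, hσ₀ ω θ, hφ ω θ⟩, hext, rich_of_forall_forces fun x => ?_⟩
  obtain ⟨σ, hσ, hx⟩ := forced x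
  exact Forces.mono (hext σ hσ) hx
end

section
/- If Φ = (Ω, Θ, φ) is a homogeneous sample-distribution limit for (R, 𝓡, μ) and 𝓡 contains a set B with 0 < μ(B) < 1, then the population measure ν on (Θ, 𝓕) is nonatomic: every A ∈ 𝓕 with ν(A) > 0 has a measurable subset of strictly smaller positive measure. -/
open MeasureTheory Set

open scoped ENNReal

theorem measure_inter_pos_lt_of_eq_mul {Θ : Type*} [MeasurableSpace Θ] {ν : Measure Θ}
    {A S : Set Θ} {c : ℝ≥0∞} (hAS : ν (A ∩ S) = ν A * c) (hApos : 0 < ν A) (hAtop : ν A ≠ ∞)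
    (hc0 : 0 < c) (hc1 : c < 1) : 0 < ν (A ∩ S) ∧ ν (A ∩ S) < ν A := by
  rw [hAS]
  refine ⟨ENNReal.mul_pos hApos.ne' hc0.ne', ?_⟩
  calc ν A * c < ν A * 1 := ENNReal.mul_lt_mul_right hApos.ne' hAtop hc1
    _ = ν A := mul_one _

theorem stmt_9_general {Ω Θ R : Type*}
    [MeasurableSpace Ω] [MeasurableSpace Θ] [mR : MeasurableSpace R]
    (π : Measure Ω) [IsProbabilityMeasure π]
    (ν : Measure Θ) [IsProbabilityMeasure ν]
    (μ : Measure R)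
    (φ : Ω → Θ → R)
    -- (b) a.s. the sample functions are measurable with distribution `μ`:
    (hsample : ∀ᵐ ω ∂π, Measurable (φ ω) ∧ Measure.map (φ ω) ν = μ)
    -- homogeneity:
    (hhom : ∀ A : Set Θ, MeasurableSet A → ∀ B : Set R, MeasurableSet B →
      ∀ᵐ ω ∂π, ν (A ∩ (φ ω) ⁻¹' B) = ν A * μ B)
    -- `𝓡` contains a set of measure strictly between 0 and 1:
    (hB : ∃ B : Set R, MeasurableSet B ∧ 0 < μ B ∧ μ B < 1) :
    ∀ A : Set Θ, MeasurableSet A → 0 < ν A →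
      ∃ A' : Set Θ, A' ⊆ A ∧ MeasurableSet A' ∧ 0 < ν A' ∧ ν A' < ν A := by
  intro A hA hApos
  obtain ⟨B, hBm, hB0, hB1⟩ := hB
  obtain ⟨ω, hsplit, hφω, -⟩ := ((hhom A hA B hBm).and hsample).exists
  exact ⟨A ∩ (φ ω) ⁻¹' B, inter_subset_left, hA.inter (hφω hBm),
    measure_inter_pos_lt_of_eq_mul hsplit hApos (measure_ne_top ν A) hB0 hB1⟩

/-- If `(Ω,Θ,φ)` is a homogeneous sample-distribution limit for `(R,𝓡,μ)` and `𝓡`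
contains a set of `μ`-measure strictly between `0` and `1`, then the population
measure `ν` is nonatomic: every measurable set of positive measure has a measurable
subset of strictly smaller positive measure. -/
theorem stmt_9 {Ω Θ R : Type*}
    [MeasurableSpace Ω] [MeasurableSpace Θ] [mR : MeasurableSpace R]
    (π : Measure Ω) [IsProbabilityMeasure π]
    (ν : Measure Θ) [IsProbabilityMeasure ν]
    (μ : Measure R) [IsProbabilityMeasure μ]
    (φ : Ω → Θ → R)
    -- (a) the sections `φ_θ` are i.i.d. with distribution `μ`:
    (hmeas : ∀ θ, Measurable fun ω => φ ω θ)
    (hindep : ProbabilityTheory.iIndepFun (fun θ ω => φ ω θ) π)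
    (hdist : ∀ θ, Measure.map (fun ω => φ ω θ) π = μ)
    -- (b) a.s. the sample functions are measurable with distribution `μ`:
    (hsample : ∀ᵐ ω ∂π, Measurable (φ ω) ∧ Measure.map (φ ω) ν = μ)
    -- homogeneity:
    (hhom : ∀ A : Set Θ, MeasurableSet A → ∀ B : Set R, MeasurableSet B →
      ∀ᵐ ω ∂π, ν (A ∩ (φ ω) ⁻¹' B) = ν A * μ B)
    -- `𝓡` contains a set of measure strictly between 0 and 1:
    (hB : ∃ B : Set R, MeasurableSet B ∧ 0 < μ B ∧ μ B < 1) :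
    ∀ A : Set Θ, MeasurableSet A → 0 < ν A →
      ∃ A' : Set Θ, A' ⊆ A ∧ MeasurableSet A' ∧ 0 < ν A' ∧ ν A' < ν A :=
  stmt_9_general (mR := mR) π ν μ φ hsample hhom hB
end

section
/- Suppose (Ω,𝓑,π), (Θ,𝓕,ν), (R,𝓡,μ) are probability spaces and φ : Ω × Θ → R is such that the sections φ_θ are independent with common distribution μ, φ is homogeneous (ν(A ∩ φ_ω⁻¹(B)) = ν(A)μ(B) a.s. for all A ∈ 𝓕, B ∈ 𝓡), and 𝓡 contains a set A with 0 < μ(A) < 1. Then φ is not measurable with respect to the product σ-algebra 𝓑 × 𝓕. -/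
/-!
If `φ` were `𝓑 ⊗ 𝓕`-measurable, then `φ⁻¹(A)` would already be measurable for `𝓑 ⊗ 𝓕₀`, where
`𝓕₀ ⊆ 𝓕` is generated by countably many sets, so every section `T_ω = φ_ω⁻¹(A)` lies in `𝓕₀`.
Homogeneity holds, for almost every `ω` simultaneously, on the countable π-system of finite
intersections of the generators; for such an `ω` the set `T_ω` is `ν`-independent of `𝓕₀`, hence
of itself, and `ν(T_ω) = μ(A)` is forced to be `0` or `1`.
-/

open MeasureTheory Set

open MeasurableSpace in
theorem MeasurableSpace.exists_countable_subset_measurableSet_generateFrom {α : Type*}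
    {C : Set (Set α)} {s : Set α} (hs : MeasurableSet[generateFrom C] s) :
    ∃ D ⊆ C, D.Countable ∧ MeasurableSet[generateFrom D] s := by
  induction s, hs using generateFrom_induction with
  | hC t ht =>
    exact ⟨{t}, singleton_subset_iff.2 ht, countable_singleton t, measurableSet_generateFrom rfl⟩
  | empty => exact ⟨∅, empty_subset C, countable_empty, @MeasurableSet.empty _ (generateFrom ∅)⟩
  | compl t _ ih =>
    obtain ⟨D, hDC, hD, ht⟩ := ih
    exact ⟨D, hDC, hD, ht.compl⟩
  | iUnion t _ ih =>
    choose D hDC hD ht using ih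
    exact ⟨⋃ n, D n, iUnion_subset hDC, countable_iUnion hD,
      .iUnion fun n => generateFrom_mono (subset_iUnion D n) _ (ht n)⟩

theorem Set.Countable.generatePiSystem {α : Type*} {C : Set (Set α)} (hC : C.Countable) :
    (generatePiSystem C).Countable := by
  refine ((countable_ofPred_finite_subset hC).image sInter).mono fun s hs => ?_
  induction hs with
  | @base s hs => exact ⟨{s}, ⟨finite_singleton s, singleton_subset_iff.2 hs⟩, sInter_singleton s⟩
  | inter _ _ _ ih₁ ih₂ =>
    obtain ⟨D₁, ⟨hD₁, hD₁C⟩, rfl⟩ := ih₁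
    obtain ⟨D₂, ⟨hD₂, hD₂C⟩, rfl⟩ := ih₂
    exact ⟨D₁ ∪ D₂, ⟨hD₁.union hD₂, union_subset hD₁C hD₂C⟩, sInter_union D₁ D₂⟩

theorem MeasurableSet.exists_countable_measurableSet_prod_generateFrom {α β : Type*}
    [mα : MeasurableSpace α] [MeasurableSpace β] {S : Set (α × β)} (hS : MeasurableSet S) :
    ∃ C : Set (Set β), C.Countable ∧ (∀ t ∈ C, MeasurableSet t) ∧
      MeasurableSet[mα.prod (MeasurableSpace.generateFrom C)] S := by
  rw [← generateFrom_prod] at hS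
  obtain ⟨D, hD, hDc, hSD⟩ := MeasurableSpace.exists_countable_subset_measurableSet_generateFrom hS
  choose s hs t ht hst using fun r : D => hD r.2
  have := hDc.to_subtype
  refine ⟨range t, countable_range t, forall_mem_range.2 ht,
    MeasurableSpace.generateFrom_le (fun r hr => ?_) S hSD⟩
  rw [← show s ⟨r, hr⟩ ×ˢ t ⟨r, hr⟩ = r from hst ⟨r, hr⟩]
  exact @MeasurableSet.prod α β _ (.generateFrom (range t)) _ _ (hs _)
    (MeasurableSpace.measurableSet_generateFrom (mem_range_self _))

theorem ProbabilityTheory.IndepSets.measure_eq_zero_or_one_of_measurableSet_generateFrom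
    {Ω : Type*} [MeasurableSpace Ω] {μ : Measure Ω} [IsProbabilityMeasure μ]
    {P : Set (Set Ω)} (hP : IsPiSystem P) (hPm : ∀ s ∈ P, MeasurableSet s) {t : Set Ω}
    (ht : MeasurableSet[MeasurableSpace.generateFrom P] t) (hind : IndepSets P {t} μ) :
    μ t = 0 ∨ μ t = 1 := by
  have htm : MeasurableSet t := MeasurableSpace.generateFrom_le hPm t ht
  have h := hind.indep' hPm (by simpa using htm) hP (IsPiSystem.singleton t)
  exact measure_eq_zero_or_one_of_indepSet_self
    (indep_of_indep_of_le_left h (MeasurableSpace.generateFrom_singleton_le ht))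

open MeasurableSpace ProbabilityTheory in
theorem stmt_10_general {Ω Θ R : Type*}
    [MeasurableSpace Ω] [MeasurableSpace Θ] [mR : MeasurableSpace R]
    (π : Measure Ω) [IsProbabilityMeasure π]
    (ν : Measure Θ) [IsProbabilityMeasure ν]
    (μ : Measure R)
    (φ : Ω → Θ → R)
    (hhom : ∀ A : Set Θ, MeasurableSet A → ∀ B : Set R, MeasurableSet B →
      ∀ᵐ ω ∂π, ν (A ∩ (φ ω) ⁻¹' B) = ν A * μ B)
    (hA : ∃ A : Set R, MeasurableSet A ∧ 0 < μ A ∧ μ A < 1) :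
    ¬ Measurable (fun p : Ω × Θ => φ p.1 p.2) := by
  obtain ⟨A, hAm, ha0, ha1⟩ := hA
  intro hφ
  obtain ⟨C, hCc, hCm, hS⟩ := (hφ hAm).exists_countable_measurableSet_prod_generateFrom
  have hPm : ∀ G ∈ generatePiSystem C, MeasurableSet G :=
    fun G => generatePiSystem_measurableSet hCm G
  have hsec : ∀ ω, MeasurableSet[generateFrom (generatePiSystem C)] (φ ω ⁻¹' A) := fun ω => by
    rw [generateFrom_generatePiSystem_eq]
    exact @measurable_prodMk_left Ω Θ _ (generateFrom C) ω _ hS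
  obtain ⟨ω, hωP, hω⟩ := (((ae_ball_iff hCc.generatePiSystem).2 fun G hG =>
    hhom G (hPm G hG) A hAm).and (hhom univ .univ A hAm)).exists
  have hνT : ν (φ ω ⁻¹' A) = μ A := by simpa using hω
  have hind : IndepSets (generatePiSystem C) {φ ω ⁻¹' A} ν :=
    (IndepSets_iff _ _ _).2 fun G T hG hT => by rw [mem_singleton_iff.1 hT, hωP G hG, hνT]
  rcases hind.measure_eq_zero_or_one_of_measurableSet_generateFrom
    (isPiSystem_generatePiSystem C) hPm (hsec ω) with h | h <;> rw [hνT] at h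
  exacts [ha0.ne' h, ha1.ne h]

/-- Nonmeasurability of a homogeneous sample-distribution limit: if the sections `φ_θ`
are independent with common distribution `μ`, `φ` is homogeneous, and `𝓡` contains a
set of `μ`-measure strictly between `0` and `1`, then `φ` is not measurable with
respect to the product σ-algebra `𝓑 ⊗ 𝓕`. -/
theorem stmt_10 {Ω Θ R : Type*}
    [MeasurableSpace Ω] [MeasurableSpace Θ] [mR : MeasurableSpace R]
    (π : Measure Ω) [IsProbabilityMeasure π]
    (ν : Measure Θ) [IsProbabilityMeasure ν]
    (μ : Measure R) [IsProbabilityMeasure μ]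
    (φ : Ω → Θ → R)
    (hmeasθ : ∀ θ, Measurable fun ω => φ ω θ)
    (hmeasω : ∀ ω, Measurable (φ ω))
    (hindep : ProbabilityTheory.iIndepFun (fun θ ω => φ ω θ) π)
    (hdist : ∀ θ, Measure.map (fun ω => φ ω θ) π = μ)
    (hhom : ∀ A : Set Θ, MeasurableSet A → ∀ B : Set R, MeasurableSet B →
      ∀ᵐ ω ∂π, ν (A ∩ (φ ω) ⁻¹' B) = ν A * μ B)
    (hA : ∃ A : Set R, MeasurableSet A ∧ 0 < μ A ∧ μ A < 1) :
    ¬ Measurable (fun p : Ω × Θ => φ p.1 p.2) :=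
  stmt_10_general (mR := mR) π ν μ φ hhom hA
end

section
/- Let 𝓔 be the σ-algebra of countable and co-countable subsets of [0,1], and ε the measure with ε(A) = 0 if A is countable and ε(A) = 1 if [0,1]\A is countable. Then ε is a probability measure on 𝓔, and any injective function φ : [0,1] × [0,1] → [0,1] is measurable with respect to the product σ-algebra 𝓔 ⊗ 𝓔 (with target σ-algebra 𝓔). -/
open MeasureTheory Set

/-- The countable–cocountable σ-algebra on a type. -/
def cocountableSigmaAlgebra (X : Type*) : MeasurableSpace X where
  MeasurableSet' s := s.Countable ∨ sᶜ.Countable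
  measurableSet_empty := Or.inl Set.countable_empty
  measurableSet_compl s h := by
    rcases h with h | h
    · exact Or.inr (by simpa using h)
    · exact Or.inl h
  measurableSet_iUnion f h := by
    by_cases hc : ∀ n, (f n).Countable
    · exact Or.inl (Set.countable_iUnion hc)
    · push_neg at hc
      obtain ⟨n, hn⟩ := hc
      rcases h n with h' | h'
      · exact absurd h' hn
      · refine Or.inr (h'.mono ?_)
        rw [Set.compl_iUnion]
        exact Set.iInter_subset _ n

/-!
The measure `ε` vanishes on countable sets and has mass one on the cocountable ones; it is
countably additive because in a disjoint family of measurable sets at most one is not countable: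
the others lie in its countable complement.
An injective map pulls countable sets back to countable sets, and countable sets of `𝓔 ⊗ 𝓔` are
measurable since its singletons `{x} ×ˢ {y}` are; measurability of `φ` follows by taking
complements.
-/

namespace cocountableSigmaAlgebra

variable {X : Type*}

theorem measurableSingletonClass : @MeasurableSingletonClass X (cocountableSigmaAlgebra X) :=
  @MeasurableSingletonClass.mk X (cocountableSigmaAlgebra X)
    fun x => Or.inl (countable_singleton x)

theorem measurable_of_injective {α : Type*} [MeasurableSpace α] [MeasurableSingletonClass α]
    {f : α → X} (hf : f.Injective) : @Measurable α X _ (cocountableSigmaAlgebra X) f := by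
  rintro s (hs | hs)
  · exact (hs.preimage hf).measurableSet
  · simpa using ((hs.preimage hf).measurableSet : MeasurableSet (f ⁻¹' sᶜ)).compl

theorem not_countable_of_compl_countable [Uncountable X] {s : Set X} (hs : sᶜ.Countable) :
    ¬ s.Countable := fun h => not_countable_univ (by simpa using h.union hs)

open Classical in
noncomputable def measure (X : Type*) : @Measure X (cocountableSigmaAlgebra X) :=
  @Measure.ofMeasurable X (cocountableSigmaAlgebra X)
    (fun s _ => if s.Countable then 0 else 1) (by simp) <| by
    intro f hf hd
    by_cases hc : ∀ i, (f i).Countable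
    · simp [hc, countable_iUnion hc]
    · obtain ⟨n, hn⟩ := not_forall.mp hc
      have hothers : ∀ i ≠ n, (f i).Countable := fun i hi =>
        ((hf n).resolve_left hn).mono (hd hi).subset_compl_right
      have hU : ¬ (⋃ i, f i).Countable := fun h => hn (h.mono (subset_iUnion f n))
      rw [if_neg hU, tsum_eq_single n fun i hi => if_pos (hothers i hi), if_neg hn]

theorem measure_apply {s : Set X} (hs : @MeasurableSet X (cocountableSigmaAlgebra X) s) :
    open Classical in measure X s = if s.Countable then 0 else 1 :=
  @Measure.ofMeasurable_apply X (cocountableSigmaAlgebra X) _ _ _ s hs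

theorem measure_of_countable {s : Set X} (hs : s.Countable) : measure X s = 0 := by
  rw [measure_apply (Or.inl hs), if_pos hs]

theorem measure_of_compl_countable [Uncountable X] {s : Set X} (hs : sᶜ.Countable) :
    measure X s = 1 := by
  rw [measure_apply (Or.inr hs), if_neg (not_countable_of_compl_countable hs)]

theorem isProbabilityMeasure_measure [Uncountable X] :
    @IsProbabilityMeasure X (cocountableSigmaAlgebra X) (measure X) :=
  ⟨measure_of_compl_countable (by simp)⟩

end cocountableSigmaAlgebra

instance : Uncountable (Icc (0 : ℝ) 1) :=
  ⟨by rw [countable_coe_iff, Cardinal.Real.Icc_countable_iff]; norm_num⟩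

/-- On `[0,1]` with the countable–cocountable σ-algebra `𝓔`, the set function `ε`
(`0` on countable sets, `1` on co-countable sets) is a probability measure, and any
injective `φ : [0,1] × [0,1] → [0,1]` is measurable for the product σ-algebra
`𝓔 ⊗ 𝓔` (with target `𝓔`). -/
theorem stmt_11 :
    (∃ ε : @Measure (Set.Icc (0:ℝ) 1) (cocountableSigmaAlgebra _),
      (∀ A : Set (Set.Icc (0:ℝ) 1), A.Countable → ε A = 0) ∧
      (∀ A : Set (Set.Icc (0:ℝ) 1), Aᶜ.Countable → ε A = 1) ∧
      @IsProbabilityMeasure _ (cocountableSigmaAlgebra _) ε) ∧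
    (∀ φ : (Set.Icc (0:ℝ) 1) × (Set.Icc (0:ℝ) 1) → Set.Icc (0:ℝ) 1,
      Function.Injective φ →
      @Measurable _ _
        (@Prod.instMeasurableSpace _ _ (cocountableSigmaAlgebra _)
          (cocountableSigmaAlgebra _))
        (cocountableSigmaAlgebra _) φ) := by
  refine ⟨⟨cocountableSigmaAlgebra.measure _,
    fun _ => cocountableSigmaAlgebra.measure_of_countable,
    fun _ => cocountableSigmaAlgebra.measure_of_compl_countable,
    cocountableSigmaAlgebra.isProbabilityMeasure_measure⟩, fun φ hφ => ?_⟩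
  let := cocountableSigmaAlgebra (Icc (0 : ℝ) 1)
  have := cocountableSigmaAlgebra.measurableSingletonClass (X := Icc (0 : ℝ) 1)
  exact cocountableSigmaAlgebra.measurable_of_injective hφ
end

section
/- Suppose random variables X, Y : Ω → R on a probability space (Ω,𝓑,π) are independent, A ∈ 𝓡 with π(X⁻¹(A)) = π(Y⁻¹(A)) = a ∈ (0,1), and b = (a − a²)/2. If J ∈ 𝓑 satisfies π(X⁻¹(A) △ J) < b and π(Y⁻¹(A) △ J) < b, then a contradiction follows; i.e., no such J exists. Equivalently, π(J ∩ X⁻¹(A) ∩ Y⁻¹(A)) > a − 2b = a² contradicts π(X⁻¹(A) ∩ Y⁻¹(A)) = a². -/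
/-!
Independence makes `X⁻¹(A)` and `Y⁻¹(A)` far apart: their symmetric difference has measure at
least `π(X⁻¹(A)) - π(X⁻¹(A) ∩ Y⁻¹(A)) = a - a² = 2b`. A set `J` within `b` of both would, by the
triangle inequality for symmetric differences, bring them closer than `2b`.
-/

open MeasureTheory Set

open scoped symmDiff

section

variable {α : Type*} [MeasurableSpace α] (μ : Measure α) (s t u : Set α)

theorem tsub_measure_inter_le_measure_symmDiff : μ s - μ (s ∩ t) ≤ μ (s ∆ t) :=
  tsub_le_iff_left.2 <| (measure_le_inter_add_sdiff μ s t).trans <|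
    add_le_add_right (measure_mono (le_sup_left : s \ t ≤ s ∆ t)) _

theorem tsub_measure_inter_le_measure_symmDiff_add_measure_symmDiff :
    μ s - μ (s ∩ t) ≤ μ (s ∆ u) + μ (t ∆ u) := by
  rw [symmDiff_comm t u]
  exact (tsub_measure_inter_le_measure_symmDiff μ s t).trans (measure_symmDiff_le s u t)

end

theorem stmt_16_general {Ω R : Type*} [MeasurableSpace Ω] [MeasurableSpace R]
    (π : Measure Ω)
    (X Y : Ω → R)
    (hindep : ProbabilityTheory.IndepFun X Y π)
    (A : Set R) (hA : MeasurableSet A)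
    (a : ENNReal)
    (haX : π (X ⁻¹' A) = a) (haY : π (Y ⁻¹' A) = a)
    (b : ENNReal) (hb : b = (a - a ^ 2) / 2) :
    ¬ ∃ J : Set Ω, MeasurableSet J ∧
        π (symmDiff (X ⁻¹' A) J) < b ∧ π (symmDiff (Y ⁻¹' A) J) < b := by
  rintro ⟨J, -, hXJ, hYJ⟩
  have hinter : π (X ⁻¹' A ∩ Y ⁻¹' A) = a ^ 2 := by
    rw [hindep.measure_inter_preimage_eq_mul A A hA hA, haX, haY, sq]
  have hgap : a - a ^ 2 = b + b := by
    rw [hb, ← two_mul, ENNReal.mul_div_cancel two_ne_zero ENNReal.ofNat_ne_top]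
  have hfar :=
    tsub_measure_inter_le_measure_symmDiff_add_measure_symmDiff π (X ⁻¹' A) (Y ⁻¹' A) J
  rw [haX, hinter, hgap] at hfar
  exact (hfar.trans_lt (ENNReal.add_lt_add hXJ hYJ)).false

/-- If `X` and `Y` are independent random variables with
`π(X⁻¹(A)) = π(Y⁻¹(A)) = a ∈ (0,1)` and `b = (a − a²)/2`, then no event `J` can
approximate both `X⁻¹(A)` and `Y⁻¹(A)` to within `b` in symmetric-difference measure:
such a `J` would give `π(J ∩ X⁻¹(A) ∩ Y⁻¹(A)) > a − 2b = a²`, contradicting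
`π(X⁻¹(A) ∩ Y⁻¹(A)) = a²` from independence. -/
theorem stmt_16 {Ω R : Type*} [MeasurableSpace Ω] [MeasurableSpace R]
    (π : Measure Ω) [IsProbabilityMeasure π]
    (X Y : Ω → R) (hX : Measurable X) (hY : Measurable Y)
    (hindep : ProbabilityTheory.IndepFun X Y π)
    (A : Set R) (hA : MeasurableSet A)
    (a : ENNReal) (ha0 : 0 < a) (ha1 : a < 1)
    (haX : π (X ⁻¹' A) = a) (haY : π (Y ⁻¹' A) = a)
    (b : ENNReal) (hb : b = (a - a ^ 2) / 2) :
    ¬ ∃ J : Set Ω, MeasurableSet J ∧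
        π (symmDiff (X ⁻¹' A) J) < b ∧ π (symmDiff (Y ⁻¹' A) J) < b :=
  stmt_16_general π X Y hindep A hA a haX haY b hb
end
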